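/- For every edge-labelled complementary region (i, w): X_∞(∂^R(i,w)) − X_∞(∂^L(i,w)) = Gap_Φ(i,w), where ∂^L(i,w) := (i, w ++ [false] ++ true^∞) and ∂^R(i,w) := (i, w ++ [true] ++ false^∞). Moreover, for every i : Fin N with i + 1 ≤ N − 1, the root region between initial edges i and i+1 satisfies X_∞((i+1, false^∞)) − X_∞((i, true^∞)) = ( Φ_∞((i, true^∞)) + Φ_∞((i+1, false^∞)) ) / 2. -/

import Mathlib

noncomputable section
open Filter Topology Classical

/-- Lexicographic strict order on positive edges (compared within a sphere `S(n)`). -/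
def EdgeLt {N : ℕ} (e f : Fin N × List Bool) : Prop :=
  e.1 < f.1 ∨ (e.1 = f.1 ∧ List.Lex (· < ·) e.2 f.2)

/-- The word `[s 0, …, s (m-1)]` of length `m`. -/
def word (s : ℕ → Bool) (m : ℕ) : List Bool := List.ofFn (fun k : Fin m => s k.val)

/-- The constant Boolean sequence `c^∞`. -/
def constSeq (c : Bool) : ℕ → Bool := fun _ => c

/-- The Boolean sequence `w ++ [b] ++ c^∞`. -/
def extendSeq (w : List Bool) (b c : Bool) : ℕ → Bool := fun n =>
  if h : n < w.length then w.get ⟨n, h⟩ else if n = w.length then b else c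

/-- `Y (i, v)` for an edge of `S (m+1)`: `Y_n(e) = Φ(e)/2 + ∑_{f ∈ S(n), f < e} Φ(f)`. -/
def Y {N : ℕ} (Φ : Fin N → List Bool → ℝ) (m : ℕ) (i : Fin N) (v : Fin m → Bool) : ℝ :=
  Φ i (List.ofFn v) / 2 +
    ∑ x : Fin N × (Fin m → Bool),
      if EdgeLt (x.1, List.ofFn x.2) (i, List.ofFn v) then Φ x.1 (List.ofFn x.2) else 0

/-- `X_n(p) = Y_n(p^n)`; here `m = n - 1` is the word length of the `n`-th edge. -/
def X {N : ℕ} (Φ : Fin N → List Bool → ℝ) (m : ℕ) (p : Fin N × (ℕ → Bool)) : ℝ :=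
  Y Φ m p.1 (fun k => p.2 k.val)

/-- `X_∞(p) = lim_n X_n(p)` (the limit exists for every path). -/
def Xinf {N : ℕ} (Φ : Fin N → List Bool → ℝ) (p : Fin N × (ℕ → Bool)) : ℝ :=
  limUnder atTop (fun m => X Φ m p)

/-- `Φ_∞(p) = lim_n Φ(p^n)`. -/
def PhiInf {N : ℕ} (Φ : Fin N → List Bool → ℝ) (p : Fin N × (ℕ → Bool)) : ℝ :=
  limUnder atTop (fun m => Φ p.1 (word p.2 m))

/-! Harmonicity makes `X_n` telescope along a path: a right turn at level `n` adds
`(Φ(p^n) - Φ(p^{n+1}))/2` to `X_n` and a left turn subtracts it, since after a right turn the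
left sibling joins the edges below. So along a path that eventually turns only right
(resp. left), `X_n + Φ(p^n)/2` (resp. `X_n - Φ(p^n)/2`) is eventually constant, and `X_∞` is
read off from any level beyond the last change of direction. The two boundary paths of a region
`(i, w)` agree up to level `|w|`; the two boundary paths of a root region have level-zero
values differing by exactly `Φ(i, [])`. -/

theorem List.lex_append_singleton_iff {α : Type*} {r : α → α → Prop} {u v : List α}
    (h : u.length = v.length) (b c : α) :
    List.Lex r (u ++ [b]) (v ++ [c]) ↔ List.Lex r u v ∨ u = v ∧ r b c := by
  induction u generalizing v with
  | nil =>
    obtain rfl := List.length_eq_zero_iff.mp h.symm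
    simp [List.lex_singleton_iff]
  | cons a u ih =>
    obtain ⟨a', v, rfl⟩ := List.exists_cons_of_length_eq_add_one h.symm
    simp only [List.cons_append, List.cons_lex_cons_iff, List.cons_eq_cons,
      ih (Nat.succ_injective h)]
    tauto

theorem edgeLt_irrefl {N : ℕ} (e : Fin N × List Bool) : ¬ EdgeLt e e := by
  rintro (h | ⟨-, h⟩)
  · exact lt_irrefl _ h
  · exact List.lex_irrefl (fun b => lt_irrefl b) _ h

theorem edgeLt_append_singleton_iff {N : ℕ} {a i : Fin N} {u v : List Bool}
    (h : u.length = v.length) (b c : Bool) :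
    EdgeLt (a, u ++ [b]) (i, v ++ [c]) ↔
      EdgeLt (a, u) (i, v) ∨ (a = i ∧ u = v ∧ b < c) := by
  simp only [EdgeLt, List.lex_append_singleton_iff h]
  tauto

theorem word_zero (s : ℕ → Bool) : word s 0 = [] := rfl

theorem word_succ (s : ℕ → Bool) (m : ℕ) : word s (m + 1) = word s m ++ [s m] := by
  simp only [word, List.ofFn_succ_last, Fin.val_castSucc, Fin.val_last]

theorem extendSeq_of_lt {w : List Bool} {k : ℕ} (hk : k < w.length) (b c : Bool) :
    extendSeq w b c k = w[k] :=
  dif_pos hk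

theorem extendSeq_length (w : List Bool) (b c : Bool) : extendSeq w b c w.length = b := by
  simp [extendSeq]

theorem extendSeq_of_length_lt {w : List Bool} {k : ℕ} (hk : w.length < k) (b c : Bool) :
    extendSeq w b c k = c := by
  rw [extendSeq, dif_neg (by omega), if_neg (by omega)]

theorem word_extendSeq_length (w : List Bool) (b c : Bool) :
    word (extendSeq w b c) w.length = w := by
  rw [word]
  exact List.ext_getElem (by simp) fun k _ hk => by simp [extendSeq_of_lt hk]

def IsHarmonic {N : ℕ} (Φ : Fin N → List Bool → ℝ) : Prop :=
  ∀ i w, Φ i w = Φ i (w ++ [false]) + Φ i (w ++ [true])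

def massBelow {N : ℕ} (Φ : Fin N → List Bool → ℝ) (m : ℕ) (i : Fin N) (v : Fin m → Bool) :
    ℝ :=
  ∑ x : Fin N × (Fin m → Bool),
    if EdgeLt (x.1, List.ofFn x.2) (i, List.ofFn v) then Φ x.1 (List.ofFn x.2) else 0

section Harmonic

variable {N : ℕ} {Φ : Fin N → List Bool → ℝ}

theorem sum_bool_children_below (hΦ : IsHarmonic Φ) (a i : Fin N) {u v : List Bool}
    (h : u.length = v.length) (c : Bool) :
    ∑ b : Bool, (if EdgeLt (a, u ++ [b]) (i, v ++ [c]) then Φ a (u ++ [b]) else 0) =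
      (if EdgeLt (a, u) (i, v) then Φ a u else 0) +
        if a = i ∧ u = v ∧ c = true then Φ a (u ++ [false]) else 0 := by
  simp only [Fintype.sum_bool, edgeLt_append_singleton_iff h]
  by_cases hlt : EdgeLt (a, u) (i, v)
  · have hne : ¬ (a = i ∧ u = v ∧ c = true) := by
      rintro ⟨rfl, rfl, -⟩
      exact edgeLt_irrefl _ hlt
    simp only [hlt, true_or, if_true, hne, if_false, add_zero]
    exact (add_comm _ _).trans (hΦ a u).symm
  · cases c <;> simp [hlt]

theorem massBelow_snoc (hΦ : IsHarmonic Φ) (m : ℕ) (i : Fin N) (v : Fin m → Bool) (c : Bool) :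
    massBelow Φ (m + 1) i (Fin.snoc v c) =
      massBelow Φ m i v + if c then Φ i (List.ofFn v ++ [false]) else 0 := by
  have hsnoc : ∀ (b : Bool) (u : Fin m → Bool),
      List.ofFn ((Fin.snocEquiv fun _ => Bool) (b, u)) = List.ofFn u ++ [b] :=
    fun b u => by rw [List.ofFn_succ_last]; simp
  have hv : List.ofFn (Fin.snoc v c) = List.ofFn v ++ [c] := hsnoc c v
  simp only [massBelow, Fintype.sum_prod_type, hv]
  conv_lhs =>
    enter [2, a]
    rw [← (Fin.snocEquiv fun _ => Bool).sum_comp, Fintype.sum_prod_type, Finset.sum_comm]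
  simp only [hsnoc, sum_bool_children_below hΦ _ i (List.length_ofFn.trans List.length_ofFn.symm),
    Finset.sum_add_distrib, List.ofFn_inj]
  congr 1
  cases c <;> simp [ite_and]

theorem X_eq_add_massBelow (m : ℕ) (p : Fin N × (ℕ → Bool)) :
    X Φ m p = Φ p.1 (word p.2 m) / 2 + massBelow Φ m p.1 (fun k => p.2 k) := rfl

theorem X_succ_eq (hΦ : IsHarmonic Φ) (m : ℕ) (p : Fin N × (ℕ → Bool)) :
    X Φ (m + 1) p = Φ p.1 (word p.2 (m + 1)) / 2 + massBelow Φ m p.1 (fun k => p.2 k) +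
      if p.2 m then Φ p.1 (word p.2 m ++ [false]) else 0 := by
  have hsnoc : (fun k : Fin (m + 1) => p.2 k) = Fin.snoc (fun k : Fin m => p.2 k) (p.2 m) := by
    funext k
    refine Fin.lastCases ?_ (fun j => ?_) k <;> simp
  rw [X_eq_add_massBelow, hsnoc, massBelow_snoc hΦ, add_assoc]
  rfl

theorem X_succ_add_of_true (hΦ : IsHarmonic Φ) {m : ℕ} {p : Fin N × (ℕ → Bool)}
    (h : p.2 m = true) :
    X Φ (m + 1) p + Φ p.1 (word p.2 (m + 1)) / 2 = X Φ m p + Φ p.1 (word p.2 m) / 2 := by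
  rw [X_succ_eq hΦ, X_eq_add_massBelow, word_succ, h, if_pos rfl]
  linarith [hΦ p.1 (word p.2 m)]

theorem X_succ_sub_of_false (hΦ : IsHarmonic Φ) {m : ℕ} {p : Fin N × (ℕ → Bool)}
    (h : p.2 m = false) :
    X Φ (m + 1) p - Φ p.1 (word p.2 (m + 1)) / 2 = X Φ m p - Φ p.1 (word p.2 m) / 2 := by
  rw [X_succ_eq hΦ, X_eq_add_massBelow, word_succ, h, if_neg Bool.false_ne_true]
  ring

theorem X_add_eq_of_forall_ge_true (hΦ : IsHarmonic Φ) {m₀ : ℕ} {p : Fin N × (ℕ → Bool)}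
    (h : ∀ m ≥ m₀, p.2 m = true) {m : ℕ} (hm : m₀ ≤ m) :
    X Φ m p + Φ p.1 (word p.2 m) / 2 = X Φ m₀ p + Φ p.1 (word p.2 m₀) / 2 := by
  induction m, hm using Nat.le_induction with
  | base => rfl
  | succ n hn ih => rw [X_succ_add_of_true hΦ (h n hn), ih]

theorem X_sub_eq_of_forall_ge_false (hΦ : IsHarmonic Φ) {m₀ : ℕ} {p : Fin N × (ℕ → Bool)}
    (h : ∀ m ≥ m₀, p.2 m = false) {m : ℕ} (hm : m₀ ≤ m) :
    X Φ m p - Φ p.1 (word p.2 m) / 2 = X Φ m₀ p - Φ p.1 (word p.2 m₀) / 2 := by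
  induction m, hm using Nat.le_induction with
  | base => rfl
  | succ n hn ih => rw [X_succ_sub_of_false hΦ (h n hn), ih]

theorem tendsto_PhiInf (hΦ : IsHarmonic Φ) (hnonneg : ∀ i w, 0 ≤ Φ i w)
    (p : Fin N × (ℕ → Bool)) :
    Tendsto (fun m => Φ p.1 (word p.2 m)) atTop (𝓝 (PhiInf Φ p)) := by
  have hanti : Antitone fun m => Φ p.1 (word p.2 m) := by
    refine antitone_nat_of_succ_le fun m => ?_
    rw [word_succ, hΦ p.1 (word p.2 m)]
    cases p.2 m
    · exact le_add_of_nonneg_right (hnonneg _ _)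
    · exact le_add_of_nonneg_left (hnonneg _ _)
  have hbdd : BddBelow (Set.range fun m => Φ p.1 (word p.2 m)) :=
    ⟨0, by rintro _ ⟨m, rfl⟩; exact hnonneg _ _⟩
  have h := tendsto_atTop_ciInf hanti hbdd
  rwa [PhiInf, h.limUnder_eq]

theorem Xinf_eq_of_forall_ge_true (hΦ : IsHarmonic Φ) (hnonneg : ∀ i w, 0 ≤ Φ i w)
    {m₀ : ℕ} {p : Fin N × (ℕ → Bool)} (h : ∀ m ≥ m₀, p.2 m = true) :
    Xinf Φ p = X Φ m₀ p + Φ p.1 (word p.2 m₀) / 2 - PhiInf Φ p / 2 := by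
  refine Tendsto.limUnder_eq (tendsto_const_nhds.sub ((tendsto_PhiInf hΦ hnonneg p).div_const 2)
    |>.congr' ?_)
  filter_upwards [eventually_ge_atTop m₀] with m hm
  linarith [X_add_eq_of_forall_ge_true hΦ h hm]

theorem Xinf_eq_of_forall_ge_false (hΦ : IsHarmonic Φ) (hnonneg : ∀ i w, 0 ≤ Φ i w)
    {m₀ : ℕ} {p : Fin N × (ℕ → Bool)} (h : ∀ m ≥ m₀, p.2 m = false) :
    Xinf Φ p = X Φ m₀ p - Φ p.1 (word p.2 m₀) / 2 + PhiInf Φ p / 2 := by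
  refine Tendsto.limUnder_eq (tendsto_const_nhds.add ((tendsto_PhiInf hΦ hnonneg p).div_const 2)
    |>.congr' ?_)
  filter_upwards [eventually_ge_atTop m₀] with m hm
  linarith [X_sub_eq_of_forall_ge_false hΦ h hm]

theorem X_zero (p : Fin N × (ℕ → Bool)) :
    X Φ 0 p = Φ p.1 [] / 2 + ∑ a ∈ Finset.Iio p.1, Φ a [] := by
  have hlt : ∀ a : Fin N, EdgeLt (a, []) (p.1, []) ↔ a < p.1 := fun a => by simp [EdgeLt]
  rw [X_eq_add_massBelow, massBelow, Fintype.sum_prod_type, word_zero]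
  simp only [Fintype.sum_unique, List.ofFn_zero, hlt]
  rw [← Finset.sum_filter, Finset.filter_gt_eq_Iio]

theorem X_congr {m : ℕ} {p q : Fin N × (ℕ → Bool)} (h₁ : p.1 = q.1)
    (h₂ : ∀ k < m, p.2 k = q.2 k) :
    X Φ m p = X Φ m q := by
  rw [X, X, h₁]
  congr 1
  exact funext fun k => h₂ k k.isLt

theorem Xinf_sub_Xinf_of_region (hΦ : IsHarmonic Φ) (hnonneg : ∀ i w, 0 ≤ Φ i w)
    (i : Fin N) (w : List Bool) :
    Xinf Φ (i, extendSeq w true false) - Xinf Φ (i, extendSeq w false true) =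
      (PhiInf Φ (i, extendSeq w false true) + PhiInf Φ (i, extendSeq w true false)) / 2 := by
  have hword : ∀ b c, word (extendSeq w b c) (w.length + 1) = w ++ [b] := fun b c => by
    rw [word_succ, word_extendSeq_length, extendSeq_length]
  have htail : ∀ b c, ∀ m ≥ w.length + 1, extendSeq w b c m = c := fun b c m hm =>
    extendSeq_of_length_lt hm b c
  have hL := Xinf_eq_of_forall_ge_true hΦ hnonneg (p := (i, extendSeq w false true)) (htail _ _)
  have hR := Xinf_eq_of_forall_ge_false hΦ hnonneg (p := (i, extendSeq w true false)) (htail _ _)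
  have hL₁ := X_succ_sub_of_false hΦ (p := (i, extendSeq w false true)) (extendSeq_length ..)
  have hR₁ := X_succ_add_of_true hΦ (p := (i, extendSeq w true false)) (extendSeq_length ..)
  have hcommon :
      X Φ w.length (i, extendSeq w false true) = X Φ w.length (i, extendSeq w true false) :=
    X_congr rfl fun k hk => by simp only [extendSeq_of_lt hk]
  simp only [hword, word_extendSeq_length] at hL hR hL₁ hR₁
  linarith [hΦ i w]

theorem Xinf_sub_Xinf_of_root_region (hΦ : IsHarmonic Φ) (hnonneg : ∀ i w, 0 ≤ Φ i w)
    {i j : Fin N} (hij : (j : ℕ) = i + 1) :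
    Xinf Φ (j, constSeq false) - Xinf Φ (i, constSeq true) =
      (PhiInf Φ (i, constSeq true) + PhiInf Φ (j, constSeq false)) / 2 := by
  have hIio : Finset.Iio j = insert i (Finset.Iio i) := by
    rw [Finset.Iio_insert]
    ext a
    simp only [Finset.mem_Iio, Finset.mem_Iic, Fin.lt_def, Fin.le_def]
    omega
  rw [Xinf_eq_of_forall_ge_true hΦ hnonneg (m₀ := 0) (p := (i, constSeq true)) fun _ _ => rfl,
    Xinf_eq_of_forall_ge_false hΦ hnonneg (m₀ := 0) (p := (j, constSeq false)) fun _ _ => rfl,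
    X_zero, X_zero, word_zero,
    word_zero, hIio, Finset.sum_insert Finset.notMem_Iio_self]
  ring

end Harmonic

theorem Xinfty_width_of_regions_general (N : ℕ) (Φ : Fin N → List Bool → ℝ)
    (hpos : ∀ (i : Fin N) (w : List Bool), 0 < Φ i w)
    (hharm : ∀ (i : Fin N) (w : List Bool), Φ i w = Φ i (w ++ [false]) + Φ i (w ++ [true])) :
    (∀ (i : Fin N) (w : List Bool),
      Xinf Φ (i, extendSeq w true false) - Xinf Φ (i, extendSeq w false true) =
        (PhiInf Φ (i, extendSeq w false true) + PhiInf Φ (i, extendSeq w true false)) / 2) ∧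
    (∀ i j : Fin N, (j : ℕ) = (i : ℕ) + 1 →
      Xinf Φ (j, constSeq false) - Xinf Φ (i, constSeq true) =
        (PhiInf Φ (i, constSeq true) + PhiInf Φ (j, constSeq false)) / 2) := by
  have hnonneg : ∀ i w, 0 ≤ Φ i w := fun i w => (hpos i w).le
  exact ⟨Xinf_sub_Xinf_of_region hharm hnonneg,
    fun _ _ => Xinf_sub_Xinf_of_root_region hharm hnonneg⟩

/-- **`X_∞`-width of complementary regions.** For every edge-labelled complementary
region `(i, w)` with boundary paths `∂^L(i,w) = (i, w ++ [false] ++ true^∞)` and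
`∂^R(i,w) = (i, w ++ [true] ++ false^∞)`,
`X_∞(∂^R) − X_∞(∂^L) = Gap_Φ(i,w) = (Φ_∞(∂^L) + Φ_∞(∂^R))/2`; and for every root
region between initial edges `i` and `i+1` (with `i + 1 ≤ N − 1`),
`X_∞((i+1, false^∞)) − X_∞((i, true^∞)) = (Φ_∞((i, true^∞)) + Φ_∞((i+1, false^∞)))/2`. -/
theorem Xinfty_width_of_regions (N : ℕ) (hN : 1 ≤ N) (Φ : Fin N → List Bool → ℝ)
    (hpos : ∀ (i : Fin N) (w : List Bool), 0 < Φ i w)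
    (hharm : ∀ (i : Fin N) (w : List Bool), Φ i w = Φ i (w ++ [false]) + Φ i (w ++ [true])) :
    (∀ (i : Fin N) (w : List Bool),
      Xinf Φ (i, extendSeq w true false) - Xinf Φ (i, extendSeq w false true) =
        (PhiInf Φ (i, extendSeq w false true) + PhiInf Φ (i, extendSeq w true false)) / 2) ∧
    (∀ i j : Fin N, (j : ℕ) = (i : ℕ) + 1 →
      Xinf Φ (j, constSeq false) - Xinf Φ (i, constSeq true) =
        (PhiInf Φ (i, constSeq true) + PhiInf Φ (j, constSeq false)) / 2) :=
  Xinfty_width_of_regions_general N Φ hpos hharm
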